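/- arXiv:1609.06353 — 4 statements merged into one kernel-verified Lean document; each statement's English description precedes it below -/
import Mathlib

section
/- Let K ≥ 3, and suppose nonnegative reals R1 and R_{k,1}, R_{k,2} (for 2 ≤ k ≤ K) lie in the component-rate region. Define R2 = R_{2,1}; R_k = R_{k−1,2} + R_{k,1} for 3 ≤ k ≤ K−1; and R_K = R_{K−1,2} + R_{K,1} + R_{K,2}. Then (R1, …, R_K) lies in the closed-form region. (No hypotheses on the parameters a_j, b_{j,l} are needed.) -/
open Finset

/-!
Each `R_{k-1,2}` is moved into the next rate, so `∑_{j=l}^{k} R_j` telescopes to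
`R_{l-1,2} + ∑_{i=l}^{k} (R_{i,1} + R_{i,2})` minus the nonnegative `R_{k,2}` that is carried past
`k` (nothing is carried past `K`, and nothing into `R_2`). The bounds of the closed-form region
are then the constraints of the component-rate region.
-/

theorem Finset.sum_Icc_sub_one_add {M : Type*} [AddCommMonoid M] (g : ℕ → M) {l k : ℕ}
    (hl : 1 ≤ l) (hlk : l ≤ k + 1) :
    ∑ j ∈ Icc l k, g (j - 1) + g k = g (l - 1) + ∑ j ∈ Icc l k, g j := by
  induction k, (show l - 1 ≤ k by omega) using Nat.le_induction with
  | base => obtain ⟨m, rfl⟩ : ∃ m, l = m + 1 := ⟨l - 1, by omega⟩; simp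
  | succ k hk ih =>
    rw [sum_Icc_succ_top (by omega), sum_Icc_succ_top (by omega), Nat.add_sub_cancel,
      ih (by omega), add_assoc]

theorem sum_Icc_le_of_eq_sub_one_add {R f g : ℕ → ℝ} {l k : ℕ} (hl : 1 ≤ l) (hlk : l ≤ k)
    (hR : ∀ j ∈ Icc l k, R j = g (j - 1) + f j) (hg : 0 ≤ g k) :
    ∑ j ∈ Icc l k, R j ≤ g (l - 1) + ∑ j ∈ Icc l k, (f j + g j) := by
  have hshift := sum_Icc_sub_one_add g hl (by omega : l ≤ k + 1)
  rw [sum_congr rfl hR, sum_add_distrib, sum_add_distrib]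
  linarith

namespace RateSharing

/-- The part of `R_{j,2}` that is passed on to `R_{j+1}`. -/
def carried (K : ℕ) (r2 : ℕ → ℝ) (j : ℕ) : ℝ :=
  if 2 ≤ j ∧ j < K then r2 j else 0

/-- The part of `R_{j,1}, R_{j,2}` that stays in `R_j`. -/
def retained (K : ℕ) (r1 r2 : ℕ → ℝ) (j : ℕ) : ℝ :=
  r1 j + if j = K then r2 j else 0

variable {K j : ℕ} {r1 r2 Rt : ℕ → ℝ}

theorem carried_nonneg (hr : ∀ k, 2 ≤ k → k ≤ K → 0 ≤ r1 k ∧ 0 ≤ r2 k) :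
    0 ≤ carried K r2 j := by
  unfold carried
  split_ifs with h
  exacts [(hr j h.1 h.2.le).2, le_rfl]

theorem retained_nonneg (hr : ∀ k, 2 ≤ k → k ≤ K → 0 ≤ r1 k ∧ 0 ≤ r2 k) (h2 : 2 ≤ j)
    (hj : j ≤ K) : 0 ≤ retained K r1 r2 j := by
  have := hr j h2 hj
  unfold retained
  split_ifs <;> linarith

theorem retained_add_carried (h2 : 2 ≤ j) (hj : j ≤ K) :
    retained K r1 r2 j + carried K r2 j = r1 j + r2 j := by
  unfold retained carried
  split_ifs <;> first | omega | ring

theorem carried_sub_one_of_three_le (h3 : 3 ≤ j) (hj : j ≤ K) :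
    carried K r2 (j - 1) = r2 (j - 1) :=
  if_pos (by omega)

theorem eq_carried_add_retained (hK : 3 ≤ K) (hs2 : Rt 2 = r1 2)
    (hs3 : ∀ k, 3 ≤ k → k ≤ K - 1 → Rt k = r2 (k - 1) + r1 k)
    (hs4 : Rt K = r2 (K - 1) + r1 K + r2 K) (h2 : 2 ≤ j) (hj : j ≤ K) :
    Rt j = carried K r2 (j - 1) + retained K r1 r2 j := by
  unfold retained
  obtain rfl | h3 := (show j = 2 ∨ 3 ≤ j by omega)
  · simp [carried, hs2, show 2 ≠ K by omega]
  rw [carried_sub_one_of_three_le h3 hj]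
  obtain rfl | hjK := eq_or_lt_of_le hj
  · rw [hs4, if_pos rfl, add_assoc]
  · rw [hs3 j h3 (by omega), if_neg hjK.ne, add_zero]

theorem sum_Icc_le_carried_add (hK : 3 ≤ K) (hr : ∀ k, 2 ≤ k → k ≤ K → 0 ≤ r1 k ∧ 0 ≤ r2 k)
    (hs2 : Rt 2 = r1 2) (hs3 : ∀ k, 3 ≤ k → k ≤ K - 1 → Rt k = r2 (k - 1) + r1 k)
    (hs4 : Rt K = r2 (K - 1) + r1 K + r2 K) {l k : ℕ} (hl : 2 ≤ l) (hlk : l ≤ k) (hk : k ≤ K) :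
    ∑ j ∈ Icc l k, Rt j ≤ carried K r2 (l - 1) + ∑ j ∈ Icc l k, (r1 j + r2 j) := by
  have hrange j (hj : j ∈ Icc l k) : 2 ≤ j ∧ j ≤ K :=
    ⟨hl.trans (mem_Icc.1 hj).1, (mem_Icc.1 hj).2.trans hk⟩
  rw [← sum_congr rfl fun j hj => retained_add_carried (r1 := r1) (hrange j hj).1 (hrange j hj).2]
  exact sum_Icc_le_of_eq_sub_one_add (by omega) hlk
    (fun j hj => eq_carried_add_retained hK hs2 hs3 hs4 (hrange j hj).1 (hrange j hj).2)
    (carried_nonneg hr)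

end RateSharing

open RateSharing in
/-- If nonnegative component rates `R1, R_{k,1}, R_{k,2}` lie in the
component-rate region (with parameters `a j` and `b j l`, all indices `1`-based),
then the rates obtained by the rate-sharing definitions lie in the closed-form region.
No hypotheses on `a`, `b` are needed. -/
theorem rate_sharing_projection
    (K : ℕ) (hK : 3 ≤ K) (a : ℕ → ℝ) (b : ℕ → ℕ → ℝ)
    (R1 : ℝ) (r1 r2 : ℕ → ℝ)
    (hR1 : 0 ≤ R1)
    (hr : ∀ k, 2 ≤ k → k ≤ K → 0 ≤ r1 k ∧ 0 ≤ r2 k)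
    -- the component-rate region
    (c1 : R1 ≤ a 1)
    (c2 : ∀ k, 2 ≤ k → k ≤ K → r1 k + r2 k ≤ a k)
    (c3 : ∀ l j, 3 ≤ l → l ≤ K → l - 1 ≤ j → j ≤ K →
      r2 (l - 1) + ∑ i ∈ Finset.Icc l j, (r1 i + r2 i)
        ≤ (∑ i ∈ Finset.Icc (l - 1) j, a i) - b j l)
    -- the rate-sharing definitions
    (Rt : ℕ → ℝ)
    (hs1 : Rt 1 = R1)
    (hs2 : Rt 2 = r1 2)
    (hs3 : ∀ k, 3 ≤ k → k ≤ K - 1 → Rt k = r2 (k - 1) + r1 k)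
    (hs4 : Rt K = r2 (K - 1) + r1 K + r2 K) :
    -- (R1,…,RK) lies in the closed-form region
    (∀ k, 1 ≤ k → k ≤ K → 0 ≤ Rt k) ∧
    Rt 1 ≤ a 1 ∧
    (∀ k, 2 ≤ k → k ≤ K →
      ∑ j ∈ Finset.Icc 2 k, Rt j ≤ ∑ j ∈ Finset.Icc 2 k, a j) ∧
    (∀ l k, 3 ≤ l → l ≤ k → k ≤ K →
      ∑ j ∈ Finset.Icc l k, Rt j ≤ (∑ j ∈ Finset.Icc (l - 1) k, a j) - b k l) := by
  have htelescope := @sum_Icc_le_carried_add K r1 r2 Rt hK hr hs2 hs3 hs4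
  refine ⟨fun k hk1 hkK => ?_, hs1 ▸ c1, fun k hk2 hkK => ?_, fun l k hl hlk hkK => ?_⟩
  · obtain rfl | hk2 := (show k = 1 ∨ 2 ≤ k by omega)
    · exact hs1 ▸ hR1
    rw [eq_carried_add_retained hK hs2 hs3 hs4 hk2 hkK]
    exact add_nonneg (carried_nonneg hr) (retained_nonneg hr hk2 hkK)
  · calc ∑ j ∈ Icc 2 k, Rt j ≤ carried K r2 1 + ∑ j ∈ Icc 2 k, (r1 j + r2 j) :=
          htelescope le_rfl hk2 hkK
      _ ≤ ∑ j ∈ Icc 2 k, a j := by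
          rw [carried, if_neg (by omega), zero_add]
          exact sum_le_sum fun j hj => c2 j (mem_Icc.1 hj).1 ((mem_Icc.1 hj).2.trans hkK)
  · calc ∑ j ∈ Icc l k, Rt j ≤ carried K r2 (l - 1) + ∑ j ∈ Icc l k, (r1 j + r2 j) :=
          htelescope (by omega) hlk hkK
      _ ≤ _ := by
          rw [carried_sub_one_of_three_le hl (hlk.trans hkK)]
          exact c3 l k hl (hlk.trans hkK) (by omega) hkK
end

section
/- Let K ≥ 3 and let U1, …, U_{K−1}, X, Y1, …, Y_K be finitely-valued random variables forming the Markov chain U1 → U2 → ⋯ → U_{K−1} → X → Y_K → Y_{K−1} → ⋯ → Y1; set U_K := X and instantiate the parameters as a_1 = I(U1; Y1), a_j = I(U_j; Y_j | U_{j−1}) for 2 ≤ j ≤ K, and b_{j,l} = I(U_j; Y_{l−2} | U_{l−2}) for 3 ≤ l ≤ K, l−1 ≤ j ≤ K. If nonnegative reals (R1, …, R_K) lie in the closed-form region, then there exist nonnegative reals R_{k,1}, R_{k,2} (2 ≤ k ≤ K) lying in the component-rate region and satisfying the rate-sharing equalities R2 = R_{2,1}; R_k = R_{k−1,2} + R_{k,1}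 for 3 ≤ k ≤ K−1; R_K = R_{K−1,2} + R_{K,1} + R_{K,2}. -/
/-!
Data processing along the Markov chains supplies the only information-theoretic facts needed:
all `a_k` and `b_{j,l}` are nonnegative, `b_{j,l} ≤ b_{t,l}` for `j ≤ t` (since
`(U_j, U_{l-2}) → U_t → Y_{l-2}`), and `b_{j,j+1} ≤ a_j` (since `(U_j, U_{j-1}) → Y_j → Y_{j-1}`).

The lift is then an explicit Fourier–Motzkin back-substitution. Index `j` forwards
`R_{j,2} = max_{j ≤ t ≤ K} ∑_{i=j+1}^{t} (R_i - a_i)`, the largest amount by which the later rates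
overshoot their budgets, and keeps `R_{j,1} = R_j - R_{j-1,2}`. The component sums telescope,
`R_{l-1,2} + ∑_{i=l}^{j} (R_{i,1} + R_{i,2}) = ∑_{i=l}^{j} R_i + R_{j,2}`, so each component-rate
constraint splits, one term of the maximum at a time, into closed-form inequalities; the
boundary values `R_{1,2} = R_{K,2} = 0` give the first and last rate-sharing equalities.
-/

open scoped BigOperators Classical

noncomputable section

namespace BRSec

variable {Ω : Type*} [Fintype Ω]

def prb (p : Ω → ℝ) {α : Type*} (X : Ω → α) (a : α) : ℝ :=
  ∑ ω, if X ω = a then p ω else 0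

def IsPMF (p : Ω → ℝ) : Prop :=
  (∀ ω, 0 ≤ p ω) ∧ ∑ ω, p ω = 1

def H (p : Ω → ℝ) {α : Type*} [Fintype α] (X : Ω → α) : ℝ :=
  ∑ a, Real.negMulLog (prb p X a)

def MI (p : Ω → ℝ) {α β : Type*} [Fintype α] [Fintype β] (X : Ω → α) (Y : Ω → β) : ℝ :=
  H p X + H p Y - H p fun ω => (X ω, Y ω)

def CMI (p : Ω → ℝ) {α β γ : Type*} [Fintype α] [Fintype β] [Fintype γ]
    (X : Ω → α) (Y : Ω → β) (Z : Ω → γ) : ℝ :=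
  (H p fun ω => (X ω, Z ω)) + (H p fun ω => (Y ω, Z ω))
    - (H p fun ω => (X ω, Y ω, Z ω)) - H p Z

def MarkovTriple (p : Ω → ℝ) {α β γ : Type*} (X : Ω → α) (Y : Ω → β) (Z : Ω → γ) : Prop :=
  ∀ a b c,
    prb p (fun ω => (X ω, Y ω, Z ω)) (a, b, c) * prb p Y b
      = prb p (fun ω => (X ω, Y ω)) (a, b) * prb p (fun ω => (Y ω, Z ω)) (b, c)

section Params

variable {K : ℕ} {𝒰 : Fin (K - 1) → Type*} [∀ i, Fintype (𝒰 i)]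
  {𝒳 : Type*} [Fintype 𝒳] {𝒴 : Fin K → Type*} [∀ k, Fintype (𝒴 k)]

/-- `a_1 = I(U_1;Y_1)` and `a_j = I(U_j;Y_j|U_{j-1})` for `2 ≤ j ≤ K`, with `U_K := X`;
indices are `1`-based (value `0` outside `1 ≤ j ≤ K`). -/
def aT (p : Ω → ℝ) (U : (i : Fin (K - 1)) → Ω → 𝒰 i) (X : Ω → 𝒳)
    (Y : (k : Fin K) → Ω → 𝒴 k) (j : ℕ) : ℝ :=
  if h : 2 ≤ K ∧ 1 ≤ j ∧ j ≤ K then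
    if h1 : j = 1 then MI p (U ⟨0, by omega⟩) (Y ⟨0, by omega⟩)
    else if hK : j = K then
      CMI p X (Y ⟨j - 1, by omega⟩) (U ⟨j - 2, by omega⟩)
    else CMI p (U ⟨j - 1, by omega⟩) (Y ⟨j - 1, by omega⟩) (U ⟨j - 2, by omega⟩)
  else 0

/-- `b_{j,l} = I(U_j; Y_{l-2} | U_{l-2})` for `3 ≤ l ≤ K + 1`, `l - 1 ≤ j ≤ K`, with
`U_K := X`; indices are `1`-based (value `0` outside this range). -/
def bT (p : Ω → ℝ) (U : (i : Fin (K - 1)) → Ω → 𝒰 i) (X : Ω → 𝒳)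
    (Y : (k : Fin K) → Ω → 𝒴 k) (j l : ℕ) : ℝ :=
  if h : 3 ≤ l ∧ l ≤ K + 1 ∧ l - 1 ≤ j ∧ j ≤ K then
    if hK : j = K then CMI p X (Y ⟨l - 3, by omega⟩) (U ⟨l - 3, by omega⟩)
    else CMI p (U ⟨j - 1, by omega⟩) (Y ⟨l - 3, by omega⟩) (U ⟨l - 3, by omega⟩)
  else 0

end Params

/-- `1`-based access to a `Fin K`-indexed rate tuple. -/
def oneB {K : ℕ} (R : Fin K → ℝ) (j : ℕ) : ℝ :=
  if h : 1 ≤ j ∧ j ≤ K then R ⟨j - 1, by omega⟩ else 0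

open Real

section Entropy

variable {p : Ω → ℝ} {α β γ δ : Type*}

lemma prb_nonneg (hp : ∀ ω, 0 ≤ p ω) (X : Ω → α) (a : α) : 0 ≤ prb p X a :=
  Finset.sum_nonneg fun ω _ => ite_nonneg (hp ω) le_rfl

lemma le_prb (hp : ∀ ω, 0 ≤ p ω) (X : Ω → α) (ω : Ω) : p ω ≤ prb p X (X ω) := by
  simpa [prb] using Finset.single_le_sum (f := fun ω' => if X ω' = X ω then p ω' else 0)
    (fun ω' _ => ite_nonneg (hp ω') le_rfl) (Finset.mem_univ ω)

lemma prb_congr {X : Ω → α} {Y : Ω → β} {a : α} {b : β} (h : ∀ ω, X ω = a ↔ Y ω = b) :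
    prb p X a = prb p Y b :=
  Finset.sum_congr rfl fun ω _ => by simp only [h ω]

lemma sum_mul_comp_eq_sum_prb_mul [Fintype α] (X : Ω → α) (F : α → ℝ) :
    ∑ ω, p ω * F (X ω) = ∑ a, prb p X a * F a := by
  simp only [prb, Finset.sum_mul, ite_mul, zero_mul]
  rw [Finset.sum_comm]
  simp

lemma sum_prb [Fintype α] (X : Ω → α) : ∑ a, prb p X a = ∑ ω, p ω := by
  simpa using (sum_mul_comp_eq_sum_prb_mul (p := p) X fun _ => (1 : ℝ)).symm

lemma sum_prb_pair_left [Fintype α] (X : Ω → α) (Y : Ω → β) (b : β) :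
    ∑ a, prb p (fun ω => (X ω, Y ω)) (a, b) = prb p Y b := by
  simp only [prb]
  rw [Finset.sum_comm]
  simp [Prod.ext_iff, ite_and]

lemma H_eq_sum [Fintype α] (X : Ω → α) :
    H p X = ∑ ω, p ω * -log (prb p X (X ω)) := by
  rw [sum_mul_comp_eq_sum_prb_mul X fun a => -log (prb p X a), H]
  simp [negMulLog]

lemma H_congr [Fintype α] [Fintype β] {X : Ω → α} {Y : Ω → β}
    (h : ∀ ω ω', X ω = X ω' ↔ Y ω = Y ω') : H p X = H p Y := by
  simp only [H_eq_sum]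
  exact Finset.sum_congr rfl fun ω _ => by rw [prb_congr fun ω' => h ω' ω]

end Entropy

section ConditionalMutualInformation

variable {p : Ω → ℝ} {α β γ δ α' β' γ' : Type*} [Fintype α] [Fintype β] [Fintype γ] [Fintype δ]
  [Fintype α'] [Fintype β'] [Fintype γ']

lemma CMI_congr {X : Ω → α} {Y : Ω → β} {Z : Ω → γ} {X' : Ω → α'} {Y' : Ω → β'} {Z' : Ω → γ'}
    (hX : ∀ ω ω', X ω = X ω' ↔ X' ω = X' ω') (hY : ∀ ω ω', Y ω = Y ω' ↔ Y' ω = Y' ω')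
    (hZ : ∀ ω ω', Z ω = Z ω' ↔ Z' ω = Z' ω') : CMI p X Y Z = CMI p X' Y' Z' := by
  unfold CMI
  rw [H_congr (X := fun ω => (X ω, Z ω)) (Y := fun ω => (X' ω, Z' ω)) (by simp [hX, hZ]),
    H_congr (X := fun ω => (Y ω, Z ω)) (Y := fun ω => (Y' ω, Z' ω)) (by simp [hY, hZ]),
    H_congr (X := fun ω => (X ω, Y ω, Z ω)) (Y := fun ω => (X' ω, Y' ω, Z' ω))
      (by simp [hX, hY, hZ]), H_congr hZ]

lemma CMI_comm (X : Ω → α) (Y : Ω → β) (Z : Ω → γ) : CMI p X Y Z = CMI p Y X Z := by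
  unfold CMI
  rw [H_congr (X := fun ω => (X ω, Y ω, Z ω)) (Y := fun ω => (Y ω, X ω, Z ω))
    fun _ _ => by simp only [Prod.mk.injEq]; tauto]
  ring

lemma CMI_pair_left_eq_add (A : Ω → α) (B : Ω → β) (Y : Ω → γ) (W : Ω → δ) :
    CMI p (fun ω => (A ω, B ω)) Y W = CMI p B Y W + CMI p A Y (fun ω => (B ω, W ω)) := by
  unfold CMI
  rw [H_congr (X := fun ω => ((A ω, B ω), W ω)) (Y := fun ω => (A ω, B ω, W ω))
      fun _ _ => by simp only [Prod.mk.injEq]; tauto,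
    H_congr (X := fun ω => ((A ω, B ω), Y ω, W ω)) (Y := fun ω => (A ω, Y ω, B ω, W ω))
      fun _ _ => by simp only [Prod.mk.injEq]; tauto,
    H_congr (X := fun ω => (Y ω, B ω, W ω)) (Y := fun ω => (B ω, Y ω, W ω))
      fun _ _ => by simp only [Prod.mk.injEq]; tauto]
  ring

lemma CMI_eq_sum (X : Ω → α) (Y : Ω → β) (Z : Ω → γ) :
    CMI p X Y Z = ∑ ω, p ω *
      (log (prb p (fun ω => (X ω, Y ω, Z ω)) (X ω, Y ω, Z ω)) + log (prb p Z (Z ω))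
        - log (prb p (fun ω => (X ω, Z ω)) (X ω, Z ω))
        - log (prb p (fun ω => (Y ω, Z ω)) (Y ω, Z ω))) := by
  simp only [CMI, H_eq_sum, ← Finset.sum_add_distrib, ← Finset.sum_sub_distrib]
  exact Finset.sum_congr rfl fun ω _ => by ring

lemma one_sub_mul_div_mul_le_log {a b c d : ℝ} (ha : 0 < a) (hb : 0 < b) (hc : 0 < c)
    (hd : 0 < d) : 1 - a * b / (c * d) ≤ log c + log d - log a - log b := by
  have h := log_le_sub_one_of_pos (show 0 < a * b / (c * d) by positivity)
  rw [log_div (by positivity) (by positivity), log_mul ha.ne' hb.ne', log_mul hc.ne' hd.ne'] at h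
  linarith

lemma sum_mul_condIndep_ratio_le (hp : ∀ ω, 0 ≤ p ω) (X : Ω → α) (Y : Ω → β) (Z : Ω → γ) :
    ∑ ω, p ω * (prb p (fun ω => (X ω, Z ω)) (X ω, Z ω) * prb p (fun ω => (Y ω, Z ω)) (Y ω, Z ω)
      / (prb p (fun ω => (X ω, Y ω, Z ω)) (X ω, Y ω, Z ω) * prb p Z (Z ω))) ≤ ∑ ω, p ω := by
  set V : Ω → α × β × γ := fun ω => (X ω, Y ω, Z ω)
  set PXZ := prb p fun ω => (X ω, Z ω)
  set PYZ := prb p fun ω => (Y ω, Z ω)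
  calc _ = ∑ t, prb p V t * (PXZ (t.1, t.2.2) * PYZ (t.2.1, t.2.2) / (prb p V t * prb p Z t.2.2)) :=
        sum_mul_comp_eq_sum_prb_mul V fun t =>
          PXZ (t.1, t.2.2) * PYZ (t.2.1, t.2.2) / (prb p V t * prb p Z t.2.2)
    _ ≤ ∑ t : α × β × γ, PXZ (t.1, t.2.2) * (PYZ (t.2.1, t.2.2) / prb p Z t.2.2) := by
        refine Finset.sum_le_sum fun t _ => ?_
        rcases (prb_nonneg hp V t).eq_or_lt with h0 | hpos
        · rw [← h0, zero_mul]
          exact mul_nonneg (prb_nonneg hp _ _) (div_nonneg (prb_nonneg hp _ _) (prb_nonneg hp _ _))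
        · rw [mul_div_mul_comm, ← mul_assoc, mul_div_cancel₀ _ hpos.ne']
    _ = ∑ x, ∑ z, PXZ (x, z) * ((∑ y, PYZ (y, z)) / prb p Z z) := by
        simp only [Fintype.sum_prod_type, Finset.sum_div, Finset.mul_sum]
        exact Finset.sum_congr rfl fun x _ => Finset.sum_comm
    _ ≤ ∑ x, ∑ z, PXZ (x, z) := by
        refine Finset.sum_le_sum fun x _ => Finset.sum_le_sum fun z _ => ?_
        rw [sum_prb_pair_left]
        exact mul_le_of_le_one_right (prb_nonneg hp _ _) (div_self_le_one _)
    _ = ∑ ω, p ω := by rw [← Fintype.sum_prod_type', sum_prb]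

/-- Gibbs' inequality, `log r ≤ r - 1`, applied to the ratio `r` of the conditionally independent
law `P(x,z) P(y,z) / P(z)` to the joint law `P(x,y,z)`. -/
lemma CMI_nonneg (hp : ∀ ω, 0 ≤ p ω) (X : Ω → α) (Y : Ω → β) (Z : Ω → γ) :
    0 ≤ CMI p X Y Z := by
  have hterm : ∀ ω, p ω * (1 - prb p (fun ω => (X ω, Z ω)) (X ω, Z ω)
        * prb p (fun ω => (Y ω, Z ω)) (Y ω, Z ω)
        / (prb p (fun ω => (X ω, Y ω, Z ω)) (X ω, Y ω, Z ω) * prb p Z (Z ω)))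
      ≤ p ω * (log (prb p (fun ω => (X ω, Y ω, Z ω)) (X ω, Y ω, Z ω)) + log (prb p Z (Z ω))
        - log (prb p (fun ω => (X ω, Z ω)) (X ω, Z ω))
        - log (prb p (fun ω => (Y ω, Z ω)) (Y ω, Z ω))) := by
    intro ω
    rcases (hp ω).eq_or_lt with h0 | hpos
    · simp [← h0]
    refine mul_le_mul_of_nonneg_left (one_sub_mul_div_mul_le_log ?_ ?_ ?_ ?_) hpos.le <;>
      exact hpos.trans_le (le_prb hp _ ω)
  rw [CMI_eq_sum]
  refine le_trans ?_ (Finset.sum_le_sum fun ω _ => hterm ω)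
  simp only [mul_sub, mul_one, Finset.sum_sub_distrib, sub_nonneg]
  exact sum_mul_condIndep_ratio_le hp X Y Z

lemma MarkovTriple.CMI_eq_zero (hp : ∀ ω, 0 ≤ p ω) {A : Ω → α} {B : Ω → β} {C : Ω → γ}
    (h : MarkovTriple p A B C) : CMI p A C B = 0 := by
  rw [CMI_eq_sum]
  refine Finset.sum_eq_zero fun ω _ => ?_
  rcases (hp ω).eq_or_lt with h0 | hpos
  · rw [← h0, zero_mul]
  have hACB : prb p (fun ω => (A ω, C ω, B ω)) (A ω, C ω, B ω)
      = prb p (fun ω => (A ω, B ω, C ω)) (A ω, B ω, C ω) :=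
    prb_congr fun _ => by simp only [Prod.mk.injEq]; tauto
  have hCB : prb p (fun ω => (C ω, B ω)) (C ω, B ω) = prb p (fun ω => (B ω, C ω)) (B ω, C ω) :=
    prb_congr fun _ => by simp only [Prod.mk.injEq]; tauto
  have hABC := hpos.trans_le (le_prb hp (fun ω => (A ω, B ω, C ω)) ω)
  have hB := hpos.trans_le (le_prb hp B ω)
  have hAB := hpos.trans_le (le_prb hp (fun ω => (A ω, B ω)) ω)
  have hBC := hpos.trans_le (le_prb hp (fun ω => (B ω, C ω)) ω)
  have hlog := congrArg log (h (A ω) (B ω) (C ω))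
  rw [log_mul hABC.ne' hB.ne', log_mul hAB.ne' hBC.ne'] at hlog
  rw [hACB, hCB, hlog]
  ring

lemma CMI_comp_left_le (hp : ∀ ω, 0 ≤ p ω) (f : α → δ) (X : Ω → α) (Y : Ω → β) (Z : Ω → γ) :
    CMI p (fun ω => f (X ω)) Y Z ≤ CMI p X Y Z := by
  have hpair : CMI p (fun ω => (X ω, f (X ω))) Y Z = CMI p X Y Z :=
    CMI_congr (fun ω ω' => by constructor <;> intro h <;> simp_all) (fun _ _ => Iff.rfl)
      (fun _ _ => Iff.rfl)
  linarith [CMI_pair_left_eq_add (p := p) X (fun ω => f (X ω)) Y Z,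
    CMI_nonneg hp X Y fun ω => (f (X ω), Z ω)]

lemma CMI_comp_eq_zero (hp : ∀ ω, 0 ≤ p ω) {X : Ω → α} {Y : Ω → β} {Z : Ω → γ}
    (h : CMI p X Y Z = 0) (f : α → α') (g : β → γ') :
    CMI p (fun ω => f (X ω)) (fun ω => g (Y ω)) Z = 0 := by
  refine le_antisymm ?_ (CMI_nonneg hp _ _ _)
  calc CMI p (fun ω => f (X ω)) (fun ω => g (Y ω)) Z ≤ CMI p X (fun ω => g (Y ω)) Z :=
        CMI_comp_left_le hp f X _ Z
    _ = CMI p (fun ω => g (Y ω)) X Z := CMI_comm _ _ _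
    _ ≤ CMI p Y X Z := CMI_comp_left_le hp g Y X Z
    _ = 0 := by rw [CMI_comm, h]

lemma CMI_eq_zero_of_CMI_pair_eq_zero (hp : ∀ ω, 0 ≤ p ω) {S : Ω → α} {W : Ω → δ} {T : Ω → α'} {Y : Ω → β}
    (h : CMI p (fun ω => (S ω, W ω)) Y T = 0) : CMI p S Y (fun ω => (T ω, W ω)) = 0 := by
  have hchain := CMI_pair_left_eq_add (p := p) S W Y T
  have hswap : CMI p S Y (fun ω => (T ω, W ω)) = CMI p S Y (fun ω => (W ω, T ω)) :=
    CMI_congr (fun _ _ => Iff.rfl) (fun _ _ => Iff.rfl) fun _ _ => by simp only [Prod.mk.injEq]; tauto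
  linarith [CMI_nonneg hp W Y T, CMI_nonneg hp S Y fun ω => (W ω, T ω)]

lemma CMI_le_of_cond_eq_zero_left (hp : ∀ ω, 0 ≤ p ω) {S : Ω → α} {T : Ω → α'} {Y : Ω → β}
    {W : Ω → δ} (h : CMI p S Y (fun ω => (T ω, W ω)) = 0) : CMI p S Y W ≤ CMI p T Y W := by
  have hswap : CMI p (fun ω => (S ω, T ω)) Y W = CMI p (fun ω => (T ω, S ω)) Y W :=
    CMI_congr (fun _ _ => by simp only [Prod.mk.injEq]; tauto) (fun _ _ => Iff.rfl)
      fun _ _ => Iff.rfl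
  linarith [CMI_pair_left_eq_add (p := p) S T Y W, CMI_pair_left_eq_add (p := p) T S Y W,
    CMI_nonneg hp T Y fun ω => (S ω, W ω)]

lemma CMI_le_of_cond_eq_zero_right (hp : ∀ ω, 0 ≤ p ω) {S : Ω → α} {T : Ω → α'} {Y : Ω → β}
    {W : Ω → δ} (h : CMI p S Y (fun ω => (T ω, W ω)) = 0) : CMI p S Y W ≤ CMI p S T W := by
  have hswap : CMI p (fun ω => (Y ω, T ω)) S W = CMI p (fun ω => (T ω, Y ω)) S W :=
    CMI_congr (fun _ _ => by simp only [Prod.mk.injEq]; tauto) (fun _ _ => Iff.rfl)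
      fun _ _ => Iff.rfl
  rw [CMI_comm] at h
  linarith [CMI_pair_left_eq_add (p := p) Y T S W, CMI_pair_left_eq_add (p := p) T Y S W,
    CMI_nonneg hp T S fun ω => (Y ω, W ω), CMI_comm (p := p) S Y W, CMI_comm (p := p) S T W]

lemma MarkovTriple.CMI_le_left (hp : ∀ ω, 0 ≤ p ω) {A : Ω → α} {T : Ω → β} {C : Ω → γ}
    (h : MarkovTriple p A T C) (s : α → α') (w : α → δ) (y : γ → γ') :
    CMI p (fun ω => s (A ω)) (fun ω => y (C ω)) (fun ω => w (A ω))
      ≤ CMI p T (fun ω => y (C ω)) (fun ω => w (A ω)) :=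
  CMI_le_of_cond_eq_zero_left hp
    (CMI_eq_zero_of_CMI_pair_eq_zero hp (CMI_comp_eq_zero hp (h.CMI_eq_zero hp) (fun a => (s a, w a)) y))

lemma MarkovTriple.CMI_le_right (hp : ∀ ω, 0 ≤ p ω) {A : Ω → α} {T : Ω → β} {C : Ω → γ}
    (h : MarkovTriple p A T C) (s : α → α') (w : α → δ) (y : γ → γ') :
    CMI p (fun ω => s (A ω)) (fun ω => y (C ω)) (fun ω => w (A ω))
      ≤ CMI p (fun ω => s (A ω)) T (fun ω => w (A ω)) :=
  CMI_le_of_cond_eq_zero_right hp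
    (CMI_eq_zero_of_CMI_pair_eq_zero hp (CMI_comp_eq_zero hp (h.CMI_eq_zero hp) (fun a => (s a, w a)) y))

end ConditionalMutualInformation

lemma oneB_nonneg {K : ℕ} {R : Fin K → ℝ} (hR : ∀ k, 0 ≤ R k) (j : ℕ) : 0 ≤ oneB R j := by
  unfold oneB
  split_ifs
  exacts [hR _, le_rfl]

section Parameters

variable {p : Ω → ℝ} {K : ℕ} {𝒰 : Fin (K - 1) → Type*} [∀ i, Fintype (𝒰 i)]
  {𝒳 : Type*} [Fintype 𝒳] {𝒴 : Fin K → Type*} [∀ k, Fintype (𝒴 k)]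
  {U : (i : Fin (K - 1)) → Ω → 𝒰 i} {X : Ω → 𝒳} {Y : (k : Fin K) → Ω → 𝒴 k}

lemma aT_nonneg (hp : ∀ ω, 0 ≤ p ω) {j : ℕ} (hj : 2 ≤ j) : 0 ≤ aT p U X Y j := by
  unfold aT
  split_ifs <;> first | omega | exact CMI_nonneg hp _ _ _ | rfl

lemma bT_nonneg (hp : ∀ ω, 0 ≤ p ω) (j l : ℕ) : 0 ≤ bT p U X Y j l := by
  unfold bT
  split_ifs <;> first | exact CMI_nonneg hp _ _ _ | rfl

lemma aT_of_lt {j : ℕ} (hj : 2 ≤ j) (hjK : j < K) :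
    aT p U X Y j = CMI p (U ⟨j - 1, by omega⟩) (Y ⟨j - 1, by omega⟩) (U ⟨j - 2, by omega⟩) := by
  rw [aT, dif_pos ⟨by omega, by omega, hjK.le⟩, dif_neg (by omega), dif_neg hjK.ne]

lemma bT_of_lt {j l : ℕ} (hl : 3 ≤ l) (hlj : l - 1 ≤ j) (hjK : j < K) :
    bT p U X Y j l = CMI p (U ⟨j - 1, by omega⟩) (Y ⟨l - 3, by omega⟩) (U ⟨l - 3, by omega⟩) := by
  rw [bT, dif_pos ⟨hl, by omega, hlj, hjK.le⟩, dif_neg hjK.ne]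

lemma bT_last {l : ℕ} (hl : 3 ≤ l) (hlK : l ≤ K) :
    bT p U X Y K l = CMI p X (Y ⟨l - 3, by omega⟩) (U ⟨l - 3, by omega⟩) := by
  rw [bT, dif_pos ⟨hl, by omega, by omega, le_rfl⟩, dif_pos rfl]

lemma bT_le_bT (hp : ∀ ω, 0 ≤ p ω)
    (hchainU : ∀ j : Fin (K - 1),
      MarkovTriple p (fun ω => fun i : {i : Fin (K - 1) // i < j} => U i.1 ω) (U j)
        (fun ω => ((fun i : {i : Fin (K - 1) // j < i} => U i.1 ω), X ω,
          fun k : Fin K => Y k ω)))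
    (hchainX : MarkovTriple p (fun ω => fun i : Fin (K - 1) => U i ω) X
      (fun ω => fun k : Fin K => Y k ω))
    {l j t : ℕ} (hl : 3 ≤ l) (hlj : l - 1 ≤ j) (hjt : j ≤ t) (htK : t ≤ K) :
    bT p U X Y j l ≤ bT p U X Y t l := by
  rcases hjt.eq_or_lt with rfl | hjt
  · rfl
  rw [bT_of_lt hl hlj (by omega)]
  rcases htK.lt_or_eq with htK | rfl
  · rw [bT_of_lt hl (by omega) htK]
    have hdpi := (hchainU ⟨t - 1, by omega⟩).CMI_le_left hp
      (fun u => u ⟨⟨j - 1, by omega⟩, Fin.mk_lt_mk.2 (by omega)⟩)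
      (fun u => u ⟨⟨l - 3, by omega⟩, Fin.mk_lt_mk.2 (by omega)⟩) (fun c => c.2.2 ⟨l - 3, by omega⟩)
    exact hdpi
  · rw [bT_last hl (by omega)]
    have hdpi := hchainX.CMI_le_left hp (fun u => u ⟨j - 1, by omega⟩) (fun u => u ⟨l - 3, by omega⟩)
      (fun y => y ⟨l - 3, by omega⟩)
    exact hdpi

lemma bT_succ_le_aT (hp : ∀ ω, 0 ≤ p ω)
    (hchainY : ∀ j : Fin K,
      MarkovTriple p
        (fun ω => ((fun i : Fin (K - 1) => U i ω), X ω,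
          fun i : {i : Fin K // j < i} => Y i.1 ω))
        (Y j)
        (fun ω => fun i : {i : Fin K // i < j} => Y i.1 ω))
    {j : ℕ} (hj : 2 ≤ j) (hjK : j < K) : bT p U X Y j (j + 1) ≤ aT p U X Y j := by
  rw [bT_of_lt (by omega) (by omega) hjK, aT_of_lt hj hjK]
  have hdpi := (hchainY ⟨j - 1, by omega⟩).CMI_le_right hp (fun c => c.1 ⟨j - 1, by omega⟩)
    (fun c => c.1 ⟨j - 2, by omega⟩) (fun d => d ⟨⟨j - 2, by omega⟩, Fin.mk_lt_mk.2 (by omega)⟩)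
  exact hdpi

end Parameters

lemma sum_Icc_consecutive {M : Type*} [AddCommMonoid M] (f : ℕ → M) {l j t : ℕ}
    (hlj : l ≤ j + 1) (hjt : j ≤ t) :
    ∑ i ∈ Finset.Icc l j, f i + ∑ i ∈ Finset.Icc (j + 1) t, f i = ∑ i ∈ Finset.Icc l t, f i := by
  simpa only [Finset.Ico_add_one_right_eq_Icc] using
    Finset.sum_Ico_consecutive f hlj (by omega : j + 1 ≤ t + 1)

lemma sum_Icc_sub_pred {G : Type*} [AddCommGroup G] (g : ℕ → G) {l j : ℕ} (hl : 1 ≤ l)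
    (hlj : l - 1 ≤ j) : ∑ i ∈ Finset.Icc l j, (g i - g (i - 1)) = g j - g (l - 1) := by
  induction j, hlj using Nat.le_induction with
  | base => simp [Finset.Icc_eq_empty_of_lt (Nat.sub_one_lt_of_lt hl)]
  | succ j hj ih =>
    rw [Finset.sum_Icc_succ_top (by omega), ih, Nat.add_sub_cancel]
    abel

section Lifting

variable (K : ℕ) (R a : ℕ → ℝ)

/-- The forwarded rate `R_{j,2}`; the index `t = j` contributes the empty sum, so it is at
least `0`. -/
def slack (j : ℕ) : ℝ :=
  (insert j (Finset.Ioc j K)).sup' (Finset.insert_nonempty _ _) fun t =>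
    ∑ i ∈ Finset.Icc (j + 1) t, (R i - a i)

variable {K R a}

lemma sum_le_slack {j t : ℕ} (hjt : j < t) (htK : t ≤ K) :
    ∑ i ∈ Finset.Icc (j + 1) t, (R i - a i) ≤ slack K R a j :=
  Finset.le_sup' (fun t => ∑ i ∈ Finset.Icc (j + 1) t, (R i - a i))
    (Finset.mem_insert_of_mem (Finset.mem_Ioc.2 ⟨hjt, htK⟩))

lemma slack_nonneg (j : ℕ) : 0 ≤ slack K R a j := by
  have h := Finset.le_sup' (fun t => ∑ i ∈ Finset.Icc (j + 1) t, (R i - a i))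
    (Finset.mem_insert_self j (Finset.Ioc j K))
  simpa only [Finset.Icc_eq_empty_of_lt j.lt_succ_self, Finset.sum_empty, slack] using h

lemma slack_le {j : ℕ} {c : ℝ} (hc : 0 ≤ c)
    (h : ∀ t, j < t → t ≤ K → ∑ i ∈ Finset.Icc (j + 1) t, (R i - a i) ≤ c) :
    slack K R a j ≤ c :=
  Finset.sup'_le _ _ fun t ht => by
    rcases Finset.mem_insert.1 ht with rfl | ht
    · simpa using hc
    · exact h t (Finset.mem_Ioc.1 ht).1 (Finset.mem_Ioc.1 ht).2

lemma slack_self : slack K R a K = 0 :=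
  le_antisymm (slack_le le_rfl fun _ hKt htK => absurd hKt htK.not_gt) (slack_nonneg K)

lemma slack_succ_add_le {j : ℕ} (hjK : j < K) :
    slack K R a (j + 1) + (R (j + 1) - a (j + 1)) ≤ slack K R a j := by
  have hfirst := sum_le_slack (R := R) (a := a) j.lt_succ_self hjK
  rw [Finset.Icc_self, Finset.sum_singleton] at hfirst
  suffices slack K R a (j + 1) ≤ slack K R a j - (R (j + 1) - a (j + 1)) by linarith
  refine slack_le (by linarith) fun t hjt htK => ?_
  have hsplit := sum_le_slack (R := R) (a := a) (show j < t by omega) htK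
  rw [← sum_Icc_consecutive (l := j + 1) (j := j + 1) _ (by omega) hjt.le, Finset.Icc_self,
    Finset.sum_singleton] at hsplit
  linarith

variable {b : ℕ → ℕ → ℝ}

lemma slack_pred_le (ha : ∀ k, 2 ≤ k → k ≤ K → 0 ≤ a k)
    (hb : ∀ l t, 3 ≤ l → l ≤ t → t ≤ K → 0 ≤ b t l)
    (h3 : ∀ l k, 3 ≤ l → l ≤ k → k ≤ K →
      ∑ i ∈ Finset.Icc l k, R i ≤ (∑ i ∈ Finset.Icc (l - 1) k, a i) - b k l)
    {k : ℕ} (hk : 2 ≤ k) (hkK : k ≤ K) (hRk : 0 ≤ R k) : slack K R a (k - 1) ≤ R k := by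
  refine slack_le hRk fun t hkt htK => ?_
  have htail : ∑ i ∈ Finset.Icc (k + 1) t, (R i - a i) ≤ a k := by
    rcases (show k = t ∨ k < t by omega) with rfl | hkt'
    · simpa [Finset.Icc_eq_empty_of_lt k.lt_succ_self] using ha k hk hkK
    · have hkt := h3 (k + 1) t (by omega) hkt' htK
      rw [Nat.add_sub_cancel, ← sum_Icc_consecutive (l := k) (j := k) _ k.le_succ (by omega),
        Finset.Icc_self, Finset.sum_singleton] at hkt
      rw [Finset.sum_sub_distrib]
      linarith [hb (k + 1) t (by omega) hkt' htK]
  rw [Nat.sub_add_cancel (by omega : 1 ≤ k), ← sum_Icc_consecutive (l := k) (j := k) _ k.le_succ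
    (by omega), Finset.Icc_self, Finset.sum_singleton]
  linarith

lemma slack_le_of_closedForm (hba : ∀ j, 2 ≤ j → j < K → b j (j + 1) ≤ a j)
    (hb_mono : ∀ l j t, 3 ≤ l → l - 1 ≤ j → j ≤ t → t ≤ K → b j l ≤ b t l)
    (h3 : ∀ l k, 3 ≤ l → l ≤ k → k ≤ K →
      ∑ i ∈ Finset.Icc l k, R i ≤ (∑ i ∈ Finset.Icc (l - 1) k, a i) - b k l)
    {l j : ℕ} (hl : 3 ≤ l) (hlK : l ≤ K) (hlj : l - 1 ≤ j) (hjK : j ≤ K) :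
    slack K R a j ≤ (∑ i ∈ Finset.Icc (l - 1) j, a i) - b j l - ∑ i ∈ Finset.Icc l j, R i := by
  refine slack_le ?_ fun t hjt htK => ?_
  · rcases (show j = l - 1 ∨ l ≤ j by omega) with rfl | hlj'
    · have hba' := hba (l - 1) (by omega) (by omega)
      rw [Nat.sub_add_cancel (by omega : 1 ≤ l)] at hba'
      simp [Finset.Icc_eq_empty_of_lt (Nat.sub_one_lt_of_lt hl), hba']
    · linarith [h3 l j hl hlj' hjK]
  · have hRt := sum_Icc_consecutive R (l := l) (by omega) hjt.le
    have hat := sum_Icc_consecutive a (l := l - 1) (by omega) hjt.le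
    rw [Finset.sum_sub_distrib]
    linarith [h3 l t hl (by omega) htK, hb_mono l j t hl hlj hjt.le htK]

theorem exists_componentRates_of_closedForm
    (hR : ∀ k, 2 ≤ k → k ≤ K → 0 ≤ R k) (ha : ∀ k, 2 ≤ k → k ≤ K → 0 ≤ a k)
    (hb : ∀ l t, 3 ≤ l → l ≤ t → t ≤ K → 0 ≤ b t l)
    (hb_mono : ∀ l j t, 3 ≤ l → l - 1 ≤ j → j ≤ t → t ≤ K → b j l ≤ b t l)
    (hba : ∀ j, 2 ≤ j → j < K → b j (j + 1) ≤ a j)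
    (h2 : ∀ k, 2 ≤ k → k ≤ K → ∑ i ∈ Finset.Icc 2 k, R i ≤ ∑ i ∈ Finset.Icc 2 k, a i)
    (h3 : ∀ l k, 3 ≤ l → l ≤ k → k ≤ K →
      ∑ i ∈ Finset.Icc l k, R i ≤ (∑ i ∈ Finset.Icc (l - 1) k, a i) - b k l) :
    ∃ r1 r2 : ℕ → ℝ,
      (∀ k, 2 ≤ k → k ≤ K → 0 ≤ r1 k ∧ 0 ≤ r2 k) ∧
      (∀ k, 2 ≤ k → k ≤ K → r1 k + r2 k ≤ a k) ∧
      (∀ l j, 3 ≤ l → l ≤ K → l - 1 ≤ j → j ≤ K →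
        r2 (l - 1) + ∑ i ∈ Finset.Icc l j, (r1 i + r2 i)
          ≤ (∑ i ∈ Finset.Icc (l - 1) j, a i) - b j l) ∧
      R 2 = r1 2 ∧
      (∀ k, 3 ≤ k → k ≤ K - 1 → R k = r2 (k - 1) + r1 k) ∧
      R K = r2 (K - 1) + r1 K + r2 K := by
  have hslack_one : slack K R a 1 = 0 :=
    le_antisymm (slack_le le_rfl fun t ht htK => by
      simpa [Finset.sum_sub_distrib] using h2 t ht htK) (slack_nonneg 1)
  refine ⟨fun k => R k - slack K R a (k - 1), slack K R a,
    fun k hk hkK => ⟨sub_nonneg.2 (slack_pred_le ha hb h3 hk hkK (hR k hk hkK)), slack_nonneg k⟩,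
    fun k hk hkK => ?_, fun l j hl hlK hlj hjK => ?_, by simp [hslack_one],
    fun k _ _ => by ring, by rw [slack_self]; ring⟩
  · have hstep := slack_succ_add_le (R := R) (a := a) (show k - 1 < K by omega)
    rw [Nat.sub_add_cancel (by omega : 1 ≤ k)] at hstep
    linarith
  · have htele : ∑ i ∈ Finset.Icc l j, (R i - slack K R a (i - 1) + slack K R a i)
        = ∑ i ∈ Finset.Icc l j, R i + (slack K R a j - slack K R a (l - 1)) := by
      rw [← sum_Icc_sub_pred _ (by omega) hlj, ← Finset.sum_add_distrib]
      exact Finset.sum_congr rfl fun i _ => by ring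
    rw [htele]
    linarith [slack_le_of_closedForm hba hb_mono h3 hl hlK hlj hjK]

end Lifting

theorem closed_form_region_lifts_general
    {K : ℕ}
    {Ωs : Type} [Fintype Ωs] (p : Ωs → ℝ) (hp : IsPMF p)
    {𝒰 : Fin (K - 1) → Type} [∀ i, Fintype (𝒰 i)]
    {𝒳 : Type} [Fintype 𝒳] {𝒴 : Fin K → Type} [∀ k, Fintype (𝒴 k)]
    (U : (i : Fin (K - 1)) → Ωs → 𝒰 i) (X : Ωs → 𝒳) (Y : (k : Fin K) → Ωs → 𝒴 k)
    -- the Markov chain U₁ → ⋯ → U_{K-1} → X → Y_K → ⋯ → Y₁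
    (hchainU : ∀ j : Fin (K - 1),
      MarkovTriple p (fun ω => fun i : {i : Fin (K - 1) // i < j} => U i.1 ω) (U j)
        (fun ω => ((fun i : {i : Fin (K - 1) // j < i} => U i.1 ω), X ω,
          fun k : Fin K => Y k ω)))
    (hchainX : MarkovTriple p (fun ω => fun i : Fin (K - 1) => U i ω) X
      (fun ω => fun k : Fin K => Y k ω))
    (hchainY : ∀ j : Fin K,
      MarkovTriple p
        (fun ω => ((fun i : Fin (K - 1) => U i ω), X ω,
          fun i : {i : Fin K // j < i} => Y i.1 ω))
        (Y j)
        (fun ω => fun i : {i : Fin K // i < j} => Y i.1 ω))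
    (R : Fin K → ℝ) (hR : ∀ k, 0 ≤ R k)
    -- (R₁,…,R_K) lies in the closed-form region
    (h1 : oneB R 1 ≤ aT p U X Y 1)
    (h2 : ∀ k : ℕ, 2 ≤ k → k ≤ K →
      ∑ j ∈ Finset.Icc 2 k, oneB R j ≤ ∑ j ∈ Finset.Icc 2 k, aT p U X Y j)
    (h3 : ∀ l k : ℕ, 3 ≤ l → l ≤ k → k ≤ K →
      ∑ j ∈ Finset.Icc l k, oneB R j ≤
        (∑ j ∈ Finset.Icc (l - 1) k, aT p U X Y j) - bT p U X Y k l) :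
    -- there exist component rates in the component-rate region with rate sharing
    ∃ r1 r2 : ℕ → ℝ,
      (∀ k, 2 ≤ k → k ≤ K → 0 ≤ r1 k ∧ 0 ≤ r2 k) ∧
      oneB R 1 ≤ aT p U X Y 1 ∧
      (∀ k, 2 ≤ k → k ≤ K → r1 k + r2 k ≤ aT p U X Y k) ∧
      (∀ l j, 3 ≤ l → l ≤ K → l - 1 ≤ j → j ≤ K →
        r2 (l - 1) + ∑ i ∈ Finset.Icc l j, (r1 i + r2 i)
          ≤ (∑ i ∈ Finset.Icc (l - 1) j, aT p U X Y i) - bT p U X Y j l) ∧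
      -- the rate-sharing equalities
      oneB R 2 = r1 2 ∧
      (∀ k, 3 ≤ k → k ≤ K - 1 → oneB R k = r2 (k - 1) + r1 k) ∧
      oneB R K = r2 (K - 1) + r1 K + r2 K := by
  obtain ⟨r1, r2, hnonneg, hsingle, hregion, hshare⟩ :=
    exists_componentRates_of_closedForm (R := oneB R) (a := aT p U X Y) (b := bT p U X Y)
      (fun k _ _ => oneB_nonneg hR k) (fun _ hk _ => aT_nonneg hp.1 hk)
      (fun l t _ _ _ => bT_nonneg hp.1 t l) (fun _ _ _ => bT_le_bT hp.1 hchainU hchainX)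
      (fun _ => bT_succ_le_aT hp.1 hchainY) h2 h3
  exact ⟨r1, r2, hnonneg, h1, hsingle, hregion, hshare⟩

/-- Converse of the rate-sharing projection (the other half of the
inductive Fourier–Motzkin elimination): with parameters instantiated by the mutual
informations of random variables forming the Markov chain
`U_1 → ⋯ → U_{K-1} → X → Y_K → ⋯ → Y_1` (and `U_K := X`), every nonnegative tuple in
the closed-form region arises from component rates in the component-rate region via
the rate-sharing equalities.  All indices are `1`-based via `oneB`, `aT`, `bT`. -/
theorem closed_form_region_lifts
    {K : ℕ} (hK : 3 ≤ K)
    {Ωs : Type} [Fintype Ωs] (p : Ωs → ℝ) (hp : IsPMF p)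
    {𝒰 : Fin (K - 1) → Type} [∀ i, Fintype (𝒰 i)]
    {𝒳 : Type} [Fintype 𝒳] {𝒴 : Fin K → Type} [∀ k, Fintype (𝒴 k)]
    (U : (i : Fin (K - 1)) → Ωs → 𝒰 i) (X : Ωs → 𝒳) (Y : (k : Fin K) → Ωs → 𝒴 k)
    -- the Markov chain U₁ → ⋯ → U_{K-1} → X → Y_K → ⋯ → Y₁
    (hchainU : ∀ j : Fin (K - 1),
      MarkovTriple p (fun ω => fun i : {i : Fin (K - 1) // i < j} => U i.1 ω) (U j)
        (fun ω => ((fun i : {i : Fin (K - 1) // j < i} => U i.1 ω), X ω,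
          fun k : Fin K => Y k ω)))
    (hchainX : MarkovTriple p (fun ω => fun i : Fin (K - 1) => U i ω) X
      (fun ω => fun k : Fin K => Y k ω))
    (hchainY : ∀ j : Fin K,
      MarkovTriple p
        (fun ω => ((fun i : Fin (K - 1) => U i ω), X ω,
          fun i : {i : Fin K // j < i} => Y i.1 ω))
        (Y j)
        (fun ω => fun i : {i : Fin K // i < j} => Y i.1 ω))
    (R : Fin K → ℝ) (hR : ∀ k, 0 ≤ R k)
    -- (R₁,…,R_K) lies in the closed-form region
    (h1 : oneB R 1 ≤ aT p U X Y 1)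
    (h2 : ∀ k : ℕ, 2 ≤ k → k ≤ K →
      ∑ j ∈ Finset.Icc 2 k, oneB R j ≤ ∑ j ∈ Finset.Icc 2 k, aT p U X Y j)
    (h3 : ∀ l k : ℕ, 3 ≤ l → l ≤ k → k ≤ K →
      ∑ j ∈ Finset.Icc l k, oneB R j ≤
        (∑ j ∈ Finset.Icc (l - 1) k, aT p U X Y j) - bT p U X Y k l) :
    -- there exist component rates in the component-rate region with rate sharing
    ∃ r1 r2 : ℕ → ℝ,
      (∀ k, 2 ≤ k → k ≤ K → 0 ≤ r1 k ∧ 0 ≤ r2 k) ∧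
      oneB R 1 ≤ aT p U X Y 1 ∧
      (∀ k, 2 ≤ k → k ≤ K → r1 k + r2 k ≤ aT p U X Y k) ∧
      (∀ l j, 3 ≤ l → l ≤ K → l - 1 ≤ j → j ≤ K →
        r2 (l - 1) + ∑ i ∈ Finset.Icc l j, (r1 i + r2 i)
          ≤ (∑ i ∈ Finset.Icc (l - 1) j, aT p U X Y i) - bT p U X Y j l) ∧
      -- the rate-sharing equalities
      oneB R 2 = r1 2 ∧
      (∀ k, 3 ≤ k → k ≤ K - 1 → oneB R k = r2 (k - 1) + r1 k) ∧
      oneB R K = r2 (K - 1) + r1 K + r2 K :=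
  closed_form_region_lifts_general p hp U X Y hchainU hchainX hchainY R hR h1 h2 h3

end BRSec
end
end

section
/- Let a_1, a_2, a_3, b_{2,3}, b_{3,3}, b_{3,4} be real numbers with 0 ≤ b_{2,3}, b_{2,3} ≤ a_2, b_{2,3} ≤ b_{3,3}, and 0 ≤ b_{3,4}. Then for all nonnegative reals R1, R2, R3, R_{3,2}: there exist nonnegative reals R_{2,1}, R_{2,2}, R_{3,1} with R2 = R_{2,1} and R3 = R_{2,2} + R_{3,1} satisfying R1 ≤ a_1; R_{2,1} + R_{2,2} ≤ a_2; R_{3,1} + R_{3,2} ≤ a_3; R_{2,2} ≤ a_2 − b_{2,3}; R_{2,2} + R_{3,1} + R_{3,2} ≤ a_2 + a_3 − b_{3,3}; and R_{3,2} ≤ a_3 − b_{3,4}, if and only if R1 ≤ a_1; R2 ≤ a_2; R2 + R3 + R_{3,2} ≤ a_2 + a_3; R3 + R_{3,2} ≤ a_2 + a_3 − b_{3,3}; and R_{3,2} ≤ a_3 − b_{3,4}. -/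
/-! Substituting `R21 = R2` and `R31 = R3 - R22` leaves `R22` as the only free variable, bounded
below by `0` and `R3 + R32 - a3` and above by `R3`, `a2 - b23` and `a2 - R2`. Such an `R22` exists
iff every lower bound is at most every upper bound, and with `b23 ≤ b33` and `0 ≤ b34` these
pairwise comparisons reduce to the right-hand system. -/

theorem Finset.exists_between_of_forall_le {α : Type*} [LinearOrder α] [Nonempty α]
    {L U : Finset α} (h : ∀ l ∈ L, ∀ u ∈ U, l ≤ u) :
    ∃ x, (∀ l ∈ L, l ≤ x) ∧ ∀ u ∈ U, x ≤ u := by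
  by_cases hL : L.Nonempty
  · exact ⟨L.max' hL, L.le_max', h _ (L.max'_mem hL)⟩
  rw [Finset.not_nonempty_iff_eq_empty] at hL
  subst hL
  by_cases hU : U.Nonempty
  · exact ⟨U.min' hU, by simp, U.min'_le⟩
  rw [Finset.not_nonempty_iff_eq_empty] at hU
  subst hU
  exact ⟨Classical.arbitrary α, by simp, by simp⟩

/-- In the application `a1 = I(U1;Y1)`, `a2 = I(U2;Y2|U1)`, `a3 = I(U3;Y3|U2)`, `b23 = I(U2;Y1|U1)`,
`b33 = I(U3;Y1|U1)`, `b34 = I(U3;Y2|U2)`. -/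
theorem fourier_motzkin_base_general
    (a1 a2 a3 b23 b33 b34 : ℝ)
    (hb23_le : b23 ≤ a2) (hb23_le' : b23 ≤ b33)
    (hb34_nonneg : 0 ≤ b34)
    (R1 R2 R3 R32 : ℝ)
    (hR2 : 0 ≤ R2) (hR3 : 0 ≤ R3) :
    (∃ R21 R22 R31 : ℝ,
        0 ≤ R21 ∧ 0 ≤ R22 ∧ 0 ≤ R31 ∧
        R2 = R21 ∧ R3 = R22 + R31 ∧
        R1 ≤ a1 ∧
        R21 + R22 ≤ a2 ∧
        R31 + R32 ≤ a3 ∧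
        R22 ≤ a2 - b23 ∧
        R22 + R31 + R32 ≤ a2 + a3 - b33 ∧
        R32 ≤ a3 - b34)
    ↔ (R1 ≤ a1 ∧
        R2 ≤ a2 ∧
        R2 + R3 + R32 ≤ a2 + a3 ∧
        R3 + R32 ≤ a2 + a3 - b33 ∧
        R32 ≤ a3 - b34) := by
  constructor
  · rintro ⟨R21, R22, R31, -, hR22, -, rfl, rfl, h1, h2, h3, -, h5, h6⟩
    exact ⟨h1, by linarith, by linarith, by linarith, h6⟩
  · rintro ⟨h1, h2, h3, h4, h5⟩
    obtain ⟨R22, hlower, hupper⟩ := Finset.exists_between_of_forall_le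
      (L := {0, R3 + R32 - a3}) (U := {R3, a2 - b23, a2 - R2}) (by
        simp only [Finset.forall_mem_insert, Finset.mem_singleton, forall_eq]
        refine ⟨⟨?_, ?_, ?_⟩, ?_, ?_, ?_⟩ <;> linarith)
    simp only [Finset.forall_mem_insert, Finset.mem_singleton, forall_eq] at hlower hupper
    obtain ⟨hR22, hR22_lower⟩ := hlower
    obtain ⟨hR22_R3, hR22_b23, hR22_R2⟩ := hupper
    exact ⟨R2, R22, R3 - R22, hR2, hR22, by linarith, rfl, by ring, h1, by linarith,
      by linarith, hR22_b23, by linarith, h5⟩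

/-- Base step (`k = 3`) of the inductive Fourier–Motzkin elimination.
Here `a1 = I(U1;Y1)`, `a2 = I(U2;Y2|U1)`, `a3 = I(U3;Y3|U2)`, `b23 = I(U2;Y1|U1)`,
`b33 = I(U3;Y1|U1)`, `b34 = I(U3;Y2|U2)`. -/
theorem fourier_motzkin_base
    (a1 a2 a3 b23 b33 b34 : ℝ)
    (hb23_nonneg : 0 ≤ b23) (hb23_le : b23 ≤ a2) (hb23_le' : b23 ≤ b33)
    (hb34_nonneg : 0 ≤ b34)
    (R1 R2 R3 R32 : ℝ)
    (hR1 : 0 ≤ R1) (hR2 : 0 ≤ R2) (hR3 : 0 ≤ R3) (hR32 : 0 ≤ R32) :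
    (∃ R21 R22 R31 : ℝ,
        0 ≤ R21 ∧ 0 ≤ R22 ∧ 0 ≤ R31 ∧
        R2 = R21 ∧ R3 = R22 + R31 ∧
        R1 ≤ a1 ∧
        R21 + R22 ≤ a2 ∧
        R31 + R32 ≤ a3 ∧
        R22 ≤ a2 - b23 ∧
        R22 + R31 + R32 ≤ a2 + a3 - b33 ∧
        R32 ≤ a3 - b34)
    ↔ (R1 ≤ a1 ∧
        R2 ≤ a2 ∧
        R2 + R3 + R32 ≤ a2 + a3 ∧
        R3 + R32 ≤ a2 + a3 - b33 ∧
        R32 ≤ a3 - b34) :=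
  fourier_motzkin_base_general a1 a2 a3 b23 b33 b34 hb23_le hb23_le' hb34_nonneg R1 R2 R3 R32 hR2
    hR3
end

section
/- Let W and A1, …, An, B1, …, Bn be finitely-valued random variables such that, for each 1 ≤ i ≤ n, A_i is conditionally independent of B_{i+1}^n given (W, A_{i+1}^n). Then ∑_{i=1}^{n} [ I(A_{i+1}^n; A_i | W, B_{i+1}^n) − I(A^{i−1}; A_i | W, B_{i+1}^n) ] = − ∑_{i=1}^{n} I(B_{i+1}^n; A_i | W, A^{i−1}). -/
open scoped BigOperators Classical

noncomputable section

namespace BRSec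

variable {Ω : Type*} [Fintype Ω]

/-! Written with conditional entropies, the `i`-th summand on the left plus the `i`-th summand on
the right is `H(A_i | W, A^{i-1}) - H(A_i | W, A_{i+1}^n)`: the two terms `H(A_i | W, B_{i+1}^n)`
cancel, the two conditionings on `(W, A^{i-1}, B_{i+1}^n)` coincide, and the Markov hypothesis
drops `B_{i+1}^n` from `H(A_i | W, A_{i+1}^n, B_{i+1}^n)`. By the chain rule, each of the two
conditional entropies sums over `i` to `H(A^n | W)`, in opposite orders. -/

lemma prb_apply_self_pos {p : Ω → ℝ} (hp : ∀ ω, 0 ≤ p ω) {α : Type*} (X : Ω → α) {ω : Ω}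
    (hω : 0 < p ω) : 0 < prb p X (X ω) := by
  have hle := Finset.single_le_sum (f := fun ω' => if X ω' = X ω then p ω' else 0)
    (fun ω' _ => by split_ifs <;> simp [hp ω']) (Finset.mem_univ ω)
  rw [if_pos rfl] at hle
  exact hω.trans_le hle

section Entropy

variable {α β γ : Type*} [Fintype α] [Fintype β] [Fintype γ]

lemma H_eq_neg_sum_mul_log_prb (p : Ω → ℝ) (X : Ω → α) :
    H p X = -∑ ω, p ω * Real.log (prb p X (X ω)) := by
  rw [← Finset.sum_fiberwise Finset.univ X, H, ← Finset.sum_neg_distrib]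
  refine Finset.sum_congr rfl fun a _ => ?_
  have hfiber : ∀ ω ∈ Finset.univ.filter (fun ω => X ω = a),
      p ω * Real.log (prb p X (X ω)) = p ω * Real.log (prb p X a) := by
    intro ω hω
    rw [(Finset.mem_filter.mp hω).2]
  rw [Finset.sum_congr rfl hfiber, ← Finset.sum_mul, Finset.sum_filter, Real.negMulLog, neg_mul]
  rfl

lemma H_congr_of_fibers (p : Ω → ℝ) (X : Ω → α) (Y : Ω → β)
    (h : ∀ ω ω', X ω = X ω' ↔ Y ω = Y ω') : H p X = H p Y := by
  have hprb : ∀ ω, prb p X (X ω) = prb p Y (Y ω) := fun ω => by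
    simp only [prb, h]
  simp only [H_eq_neg_sum_mul_log_prb, hprb]

def condH (p : Ω → ℝ) (X : Ω → α) (Y : Ω → β) : ℝ :=
  H p (fun ω => (X ω, Y ω)) - H p Y

lemma condH_congr_right (p : Ω → ℝ) (X : Ω → α) {Y : Ω → β} {Y' : Ω → γ}
    (h : ∀ ω ω', Y ω = Y ω' ↔ Y' ω = Y' ω') : condH p X Y = condH p X Y' := by
  rw [condH, condH, H_congr_of_fibers p Y Y' h,
    H_congr_of_fibers p (fun ω => (X ω, Y ω)) (fun ω => (X ω, Y' ω)) (by simp [h])]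

lemma CMI_eq_condH_sub_condH (p : Ω → ℝ) (X : Ω → α) (Y : Ω → β) (Z : Ω → γ) :
    CMI p X Y Z = condH p Y Z - condH p Y (fun ω => (X ω, Z ω)) := by
  have hswap : H p (fun ω => (X ω, Y ω, Z ω)) = H p (fun ω => (Y ω, X ω, Z ω)) :=
    H_congr_of_fibers p _ _ fun ω ω' => by simp only [Prod.mk.injEq]; tauto
  rw [CMI, condH, condH, hswap]
  ring

lemma MarkovTriple.condH_pair_eq {p : Ω → ℝ} (hp : ∀ ω, 0 ≤ p ω) {X : Ω → α} {Y : Ω → β}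
    {Z : Ω → γ} (h : MarkovTriple p X Y Z) :
    condH p X (fun ω => (Y ω, Z ω)) = condH p X Y := by
  suffices hlog : ∀ ω, p ω * Real.log (prb p (fun ω => (X ω, Y ω, Z ω)) (X ω, Y ω, Z ω))
      + p ω * Real.log (prb p Y (Y ω))
      = p ω * Real.log (prb p (fun ω => (X ω, Y ω)) (X ω, Y ω))
        + p ω * Real.log (prb p (fun ω => (Y ω, Z ω)) (Y ω, Z ω)) by
    have hsum := Finset.sum_congr rfl fun ω (_ : ω ∈ Finset.univ) => hlog ω
    simp only [Finset.sum_add_distrib] at hsum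
    simp only [condH, H_eq_neg_sum_mul_log_prb]
    linarith
  intro ω
  rcases (hp ω).eq_or_lt with hω | hω
  · simp [← hω]
  have hlog := congrArg Real.log (h (X ω) (Y ω) (Z ω))
  rw [Real.log_mul (prb_apply_self_pos hp (fun ω => (X ω, Y ω, Z ω)) hω).ne'
      (prb_apply_self_pos hp Y hω).ne',
    Real.log_mul (prb_apply_self_pos hp (fun ω => (X ω, Y ω)) hω).ne'
      (prb_apply_self_pos hp (fun ω => (Y ω, Z ω)) hω).ne'] at hlog
  linear_combination p ω * hlog

end Entropy

section ChainRule

variable (p : Ω → ℝ) {n : ℕ} {𝒲 : Type*} [Fintype 𝒲] (W : Ω → 𝒲)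
  {α : Fin n → Type*} [∀ i, Fintype (α i)] (A : (i : Fin n) → Ω → α i)

lemma H_restrict_congr {P Q : Fin n → Prop} [DecidablePred P] [DecidablePred Q]
    (hPQ : ∀ j, P j ↔ Q j) :
    H p (fun ω => (W ω, fun j : {j // P j} => A j.1 ω))
      = H p (fun ω => (W ω, fun j : {j // Q j} => A j.1 ω)) :=
  H_congr_of_fibers p _ _ fun ω ω' => by
    simp only [Prod.mk.injEq, funext_iff, Subtype.forall, hPQ]

lemma H_cons_restrict {P Q : Fin n → Prop} [DecidablePred P] [DecidablePred Q] (i : Fin n)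
    (hQ : ∀ j, Q j ↔ j = i ∨ P j) :
    H p (fun ω => (A i ω, (W ω, fun j : {j // P j} => A j.1 ω)))
      = H p (fun ω => (W ω, fun j : {j // Q j} => A j.1 ω)) :=
  H_congr_of_fibers p _ _ fun ω ω' => by
    simp only [Prod.mk.injEq, funext_iff, Subtype.forall, hQ, forall_eq_or_imp]
    tauto

lemma H_restrict_of_forall {P : Fin n → Prop} [DecidablePred P] (hP : ∀ j, P j) :
    H p (fun ω => (W ω, fun j : {j // P j} => A j.1 ω)) = H p (fun ω => (fun j => A j ω, W ω)) :=
  H_congr_of_fibers p _ _ fun ω ω' => by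
    simp only [Prod.mk.injEq, funext_iff, Subtype.forall, hP, forall_const]
    tauto

lemma H_restrict_of_forall_not {P : Fin n → Prop} [DecidablePred P] (hP : ∀ j, ¬P j) :
    H p (fun ω => (W ω, fun j : {j // P j} => A j.1 ω)) = H p W :=
  H_congr_of_fibers p _ _ fun ω ω' => by
    simp [funext_iff, hP]

lemma sum_condH_prefix :
    ∑ i : Fin n, condH p (A i) (fun ω => (W ω, fun j : {j : Fin n // j < i} => A j.1 ω))
      = condH p (fun ω j => A j ω) W := by
  let D (k : ℕ) : ℝ := H p (fun ω => (W ω, fun j : {j : Fin n // j.val < k} => A j.1 ω))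
  have hstep (i : Fin n) :
      condH p (A i) (fun ω => (W ω, fun j : {j : Fin n // j < i} => A j.1 ω))
        = D (i + 1) - D i := by
    rw [condH, H_cons_restrict p W A i (Q := fun j => j.val < i + 1) fun j => by
        rw [Fin.ext_iff, Fin.lt_def]; omega,
      H_restrict_congr p W A (Q := fun j => j.val < i) fun j => Fin.lt_def]
  have hD_top : D n = H p (fun ω => (fun j => A j ω, W ω)) :=
    H_restrict_of_forall p W A fun j => j.isLt
  have hD_zero : D 0 = H p W := H_restrict_of_forall_not p W A fun j => Nat.not_lt_zero _
  rw [Finset.sum_congr rfl fun i _ => hstep i, Fin.sum_univ_eq_sum_range (fun k => D (k + 1) - D k),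
    Finset.sum_range_sub, hD_top, hD_zero, condH]

lemma sum_condH_suffix :
    ∑ i : Fin n, condH p (A i) (fun ω => (W ω, fun j : {j : Fin n // i < j} => A j.1 ω))
      = condH p (fun ω j => A j ω) W := by
  let U (k : ℕ) : ℝ := H p (fun ω => (W ω, fun j : {j : Fin n // k ≤ j.val} => A j.1 ω))
  have hstep (i : Fin n) :
      condH p (A i) (fun ω => (W ω, fun j : {j : Fin n // i < j} => A j.1 ω))
        = U i - U (i + 1) := by
    rw [condH, H_cons_restrict p W A i (Q := fun j => i.val ≤ j) fun j => by
        rw [Fin.ext_iff, Fin.lt_def]; omega,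
      H_restrict_congr p W A (Q := fun j => i.val + 1 ≤ j) fun j => Fin.lt_def]
  have hU_zero : U 0 = H p (fun ω => (fun j => A j ω, W ω)) :=
    H_restrict_of_forall p W A fun j => Nat.zero_le _
  have hU_top : U n = H p W := H_restrict_of_forall_not p W A fun j => not_le.mpr j.isLt
  rw [Finset.sum_congr rfl fun i _ => hstep i, Fin.sum_univ_eq_sum_range (fun k => U k - U (k + 1)),
    Finset.sum_range_sub', hU_zero, hU_top, condH]

end ChainRule

lemma CMI_sub_CMI_add_CMI_eq_condH_sub_condH {p : Ω → ℝ} (hp : ∀ ω, 0 ≤ p ω)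
    {n : ℕ} {𝒲 : Type*} [Fintype 𝒲] (W : Ω → 𝒲)
    {α β : Fin n → Type*} [∀ i, Fintype (α i)] [∀ i, Fintype (β i)]
    (A : (i : Fin n) → Ω → α i) (B : (i : Fin n) → Ω → β i) (i : Fin n)
    (hi : MarkovTriple p (A i)
      (fun ω => (W ω, fun j : {j : Fin n // i < j} => A j.1 ω))
      (fun ω => fun j : {j : Fin n // i < j} => B j.1 ω)) :
    CMI p (fun ω => fun j : {j : Fin n // i < j} => A j.1 ω) (A i)
        (fun ω => (W ω, fun j : {j : Fin n // i < j} => B j.1 ω))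
      - CMI p (fun ω => fun j : {j : Fin n // j < i} => A j.1 ω) (A i)
        (fun ω => (W ω, fun j : {j : Fin n // i < j} => B j.1 ω))
      + CMI p (fun ω => fun j : {j : Fin n // i < j} => B j.1 ω) (A i)
        (fun ω => (W ω, fun j : {j : Fin n // j < i} => A j.1 ω))
    = condH p (A i) (fun ω => (W ω, fun j : {j : Fin n // j < i} => A j.1 ω))
      - condH p (A i) (fun ω => (W ω, fun j : {j : Fin n // i < j} => A j.1 ω)) := by
  have hsuffix : condH p (A i) (fun ω => (fun j : {j : Fin n // i < j} => A j.1 ω,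
        (W ω, fun j : {j : Fin n // i < j} => B j.1 ω)))
      = condH p (A i) (fun ω => (W ω, fun j : {j : Fin n // i < j} => A j.1 ω)) := by
    rw [← hi.condH_pair_eq hp]
    exact condH_congr_right p (A i) fun ω ω' => by simp only [Prod.mk.injEq]; tauto
  have hprefix : condH p (A i) (fun ω => (fun j : {j : Fin n // j < i} => A j.1 ω,
        (W ω, fun j : {j : Fin n // i < j} => B j.1 ω)))
      = condH p (A i) (fun ω => (fun j : {j : Fin n // i < j} => B j.1 ω,
        (W ω, fun j : {j : Fin n // j < i} => A j.1 ω))) :=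
    condH_congr_right p (A i) fun ω ω' => by simp only [Prod.mk.injEq]; tauto
  simp only [CMI_eq_condH_sub_condH, hsuffix, hprefix]
  ring

/-- Telescoping (Csiszár-sum-type) identity: if for each `i` the
variable `A_i` is conditionally independent of `B_{i+1}^n` given `(W, A_{i+1}^n)`,
then `∑_i [ I(A_{i+1}^n; A_i | W, B_{i+1}^n) − I(A^{i−1}; A_i | W, B_{i+1}^n) ]
= − ∑_i I(B_{i+1}^n; A_i | W, A^{i−1})`. -/
theorem telescoping_identity
    (p : Ω → ℝ) (hp : IsPMF p)
    {n : ℕ} {𝒲 : Type*} [Fintype 𝒲] (W : Ω → 𝒲)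
    {α β : Fin n → Type*} [∀ i, Fintype (α i)] [∀ i, Fintype (β i)]
    (A : (i : Fin n) → Ω → α i) (B : (i : Fin n) → Ω → β i)
    (hci : ∀ i : Fin n,
      MarkovTriple p (A i)
        (fun ω => (W ω, fun j : {j : Fin n // i < j} => A j.1 ω))
        (fun ω => fun j : {j : Fin n // i < j} => B j.1 ω)) :
    (∑ i : Fin n,
      (CMI p (fun ω => fun j : {j : Fin n // i < j} => A j.1 ω) (A i)
          (fun ω => (W ω, fun j : {j : Fin n // i < j} => B j.1 ω))
        - CMI p (fun ω => fun j : {j : Fin n // j < i} => A j.1 ω) (A i)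
          (fun ω => (W ω, fun j : {j : Fin n // i < j} => B j.1 ω))))
    = - ∑ i : Fin n,
        CMI p (fun ω => fun j : {j : Fin n // i < j} => B j.1 ω) (A i)
          (fun ω => (W ω, fun j : {j : Fin n // j < i} => A j.1 ω)) := by
  rw [eq_neg_iff_add_eq_zero, ← Finset.sum_add_distrib,
    Finset.sum_congr rfl fun i _ => CMI_sub_CMI_add_CMI_eq_condH_sub_condH hp.1 W A B i (hci i),
    Finset.sum_sub_distrib, sum_condH_prefix, sum_condH_suffix, sub_self]

end BRSec
end
end
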